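/- arXiv:2011.07256 — 4 statements merged into one kernel-verified Lean document; each statement's English description precedes it below -/
import Mathlib

section
/- Let N be a positive integer, a, δ ∈ ℝ, α₁ > 0, and set λ_n = n²π², b_n = √2/(nπ). Assume λ_{N+1} − a − δ − (1/(2α₁))·λ_{N+1}^{3/4} ≥ 0 and λ_{N+1}^{1/4} ≥ 3/(8α₁) (the latter ensures λ ↦ λ − (1/(2α₁))λ^{3/4} is nondecreasing for λ ≥ λ_{N+1}). Let κ, ζ ∈ ℝ and let (w_n)_{n>N} be reals with ∑_{n=N+1}^∞ λ_n²·w_n² < ∞ and ζ² ≤ ∑_{n=N+1}^∞ λ_n·w_n². Then 2·∑_{n=N+1}^∞ (−λ_n² + (a+δ)λ_n)·w_n² − 2·∑_{n=N+1}^∞ λ_n·w_n·b_n·κ ≤ −2·(λ_{N+1} − a − δ − (1/(2α₁))·λ_{N+1}^{3/4})·ζ² + (4α₁/(√N·π^{3/2}))·κ². -/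
/-!
The summation index `k` stands for the mode `n = k + N + 1`. Young's inequality splits each cross
term: `-2 λ_n w_n b_n κ ≤ λ_n^{7/4} w_n² / α₁ + α₁ κ² λ_n^{1/4} b_n²`. The first part is absorbed
by the dissipation, because `s ↦ s⁴ - s³/(2α₁)` is nondecreasing for `s ≥ 3/(8α₁)`, so with
`s = λ_n^{1/4}` we get
`-λ_n² + (a+δ)λ_n + λ_n^{7/4}/(2α₁) ≤ -(λ_{N+1} - a - δ - λ_{N+1}^{3/4}/(2α₁)) λ_n`;
summing against `w_n²` and using `ζ² ≤ ∑ λ_n w_n²` gives the `ζ²` term. The second part is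
`2 α₁ κ² π^{-3/2} n^{-3/2}`, and `∑_{n>N} n^{-3/2} ≤ 2/√N` by telescoping against `2/√n`.
-/

open Real Set

lemma Summable.mul_of_summable_sq {ι : Type*} {f g : ι → ℝ} (hf : Summable fun i => f i ^ 2)
    (hg : Summable fun i => g i ^ 2) : Summable fun i => f i * g i :=
  ((hf.add hg).div_const 2).of_norm_bounded fun i => by
    rw [norm_mul, Real.norm_eq_abs, Real.norm_eq_abs, le_div_iff₀ two_pos, ← sq_abs (f i),
      ← sq_abs (g i)]
    nlinarith [two_mul_le_add_sq |f i| |g i|]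

lemma summable_and_tsum_le_of_le_sub_succ {f g : ℕ → ℝ} (hf : ∀ k, 0 ≤ f k) (hg : ∀ k, 0 ≤ g k)
    (hfg : ∀ k, f k ≤ g k - g (k + 1)) : Summable f ∧ ∑' k, f k ≤ g 0 := by
  have hpartial : ∀ n, ∑ k ∈ Finset.range n, f k ≤ g 0 := fun n =>
    calc ∑ k ∈ Finset.range n, f k ≤ ∑ k ∈ Finset.range n, (g k - g (k + 1)) :=
          Finset.sum_le_sum fun k _ => hfg k
      _ = g 0 - g n := Finset.sum_range_sub' g n
      _ ≤ g 0 := sub_le_self _ (hg n)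
  exact ⟨summable_of_sum_range_le hf hpartial, Real.tsum_le_of_sum_range_le hf hpartial⟩

lemma rpow_neg_three_halves_eq {y : ℝ} (hy : 0 ≤ y) : y ^ (-(3 / 2) : ℝ) = (√y ^ 3)⁻¹ := by
  rw [rpow_neg hy, sqrt_eq_rpow, ← rpow_natCast, ← rpow_mul hy]
  norm_num

lemma rpow_neg_three_halves_le_sub {y : ℝ} (hy : 0 < y) :
    (y + 1) ^ (-(3 / 2) : ℝ) ≤ 2 / √y - 2 / √(y + 1) := by
  rw [rpow_neg_three_halves_eq (by positivity)]
  have hu : 0 < √y := sqrt_pos.2 hy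
  have huv : √y ≤ √(y + 1) := sqrt_le_sqrt (by linarith)
  have hv : 0 < √(y + 1) := hu.trans_le huv
  have hsq : √(y + 1) ^ 2 = √y ^ 2 + 1 := by
    rw [sq_sqrt hy.le, sq_sqrt (by positivity)]
  rw [div_sub_div _ _ hu.ne' hv.ne', inv_eq_one_div,
    div_le_div_iff₀ (by positivity) (by positivity)]
  have hkey : √y * (√y + √(y + 1)) ≤ 2 * √(y + 1) ^ 2 := by
    nlinarith [sq_nonneg (√y - √(y + 1))]
  nlinarith [mul_nonneg (mul_nonneg hv.le (sub_nonneg.2 huv)) (sub_nonneg.2 hkey)]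

lemma summable_and_tsum_rpow_neg_three_halves_le {x : ℝ} (hx : 0 < x) :
    (Summable fun k : ℕ => ((k : ℝ) + x + 1) ^ (-(3 / 2) : ℝ)) ∧
      ∑' k : ℕ, ((k : ℝ) + x + 1) ^ (-(3 / 2) : ℝ) ≤ 2 / √x := by
  have h := summable_and_tsum_le_of_le_sub_succ
    (f := fun k : ℕ => ((k : ℝ) + x + 1) ^ (-(3 / 2) : ℝ)) (g := fun k : ℕ => 2 / √((k : ℝ) + x))
    (fun k => by positivity) (fun k => by positivity) fun k => by
      have := rpow_neg_three_halves_le_sub (y := (k : ℝ) + x) (by positivity)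
      push_cast
      rwa [add_assoc (k : ℝ) 1 x, add_comm 1 x, ← add_assoc]
  simpa using h

lemma rpow_one_fourth_pow_four {x : ℝ} (hx : 0 ≤ x) : (x ^ (1 / 4 : ℝ)) ^ 4 = x := by
  rw [one_div]; exact_mod_cast rpow_inv_natCast_pow hx four_ne_zero

lemma rpow_one_fourth_pow_three {x : ℝ} (hx : 0 ≤ x) : (x ^ (1 / 4 : ℝ)) ^ 3 = x ^ (3 / 4 : ℝ) := by
  rw [← rpow_natCast, ← rpow_mul hx]; norm_num

lemma monotoneOn_pow_four_sub_mul_pow_three {c : ℝ} (hc : 0 ≤ c) :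
    MonotoneOn (fun s : ℝ => s ^ 4 - c * s ^ 3) (Ici (3 * c / 4)) := by
  intro t ht s _ hts
  have hct : c ≤ 4 / 3 * t := by linarith [mem_Ici.1 ht]
  have ht0 : 0 ≤ t := by linarith
  have hQ : 0 ≤ s ^ 2 + s * t + t ^ 2 := by nlinarith [sq_nonneg (s + t)]
  have hbracket : c * (s ^ 2 + s * t + t ^ 2) ≤ s ^ 3 + s ^ 2 * t + s * t ^ 2 + t ^ 3 := by
    nlinarith [mul_le_mul_of_nonneg_right hct hQ, mul_nonneg ht0 (sub_nonneg.2 hts),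
      mul_nonneg (mul_nonneg ht0 ht0) (sub_nonneg.2 hts),
      mul_nonneg (mul_nonneg (ht0.trans hts) (ht0.trans hts)) (sub_nonneg.2 hts)]
  have hprod := mul_nonneg (sub_nonneg.2 hts) (sub_nonneg.2 hbracket)
  show t ^ 4 - c * t ^ 3 ≤ s ^ 4 - c * s ^ 3
  linear_combination hprod

lemma mode_term_le {α c lam₀ lam : ℝ} (hα : 0 < α) (h₀ : 0 ≤ lam₀) (hle : lam₀ ≤ lam)
    (hmono : 3 / (8 * α) ≤ lam₀ ^ (1 / 4 : ℝ)) (w b κ : ℝ) :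
    2 * ((-lam ^ 2 + c * lam) * w ^ 2) - 2 * (lam * w * b * κ)
      ≤ -2 * (lam₀ - c - 1 / (2 * α) * lam₀ ^ (3 / 4 : ℝ)) * (lam * w ^ 2)
        + α * κ ^ 2 * (lam ^ (1 / 4 : ℝ) * b ^ 2) := by
  set t := lam₀ ^ (1 / 4 : ℝ)
  set s := lam ^ (1 / 4 : ℝ)
  have hts : t ≤ s := rpow_le_rpow h₀ hle (by norm_num)
  have hs : 0 ≤ s := rpow_nonneg (h₀.trans hle) _
  have ht3 : t ^ 3 = lam₀ ^ (3 / 4 : ℝ) := rpow_one_fourth_pow_three h₀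
  have ht4 : t ^ 4 = lam₀ := rpow_one_fourth_pow_four h₀
  have hs4 : s ^ 4 = lam := rpow_one_fourth_pow_four (h₀.trans hle)
  rw [← ht3, ← ht4, ← hs4]
  have ht : t ∈ Ici (3 * (1 / (2 * α)) / 4) := by
    rw [mem_Ici, show 3 * (1 / (2 * α)) / 4 = 3 / (8 * α) by ring]
    exact hmono
  have hmono' : t ^ 4 - 1 / (2 * α) * t ^ 3 ≤ s ^ 4 - 1 / (2 * α) * s ^ 3 :=
    monotoneOn_pow_four_sub_mul_pow_three (by positivity) ht (le_trans ht hts) hts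
  have hyoung : -2 * (s ^ 4 * w * b * κ)
      ≤ 2 * (1 / (2 * α)) * s ^ 7 * w ^ 2 + α * κ ^ 2 * (s * b ^ 2) := by
    have hsq : 0 ≤ s * (s ^ 3 * w + α * b * κ) ^ 2 / α := by positivity
    have hexpand : s * (s ^ 3 * w + α * b * κ) ^ 2 / α = 2 * (1 / (2 * α)) * s ^ 7 * w ^ 2
        + α * κ ^ 2 * (s * b ^ 2) + 2 * (s ^ 4 * w * b * κ) := by
      field_simp; ring
    linarith
  linarith [mul_le_mul_of_nonneg_left hmono' (by positivity : 0 ≤ s ^ 4 * w ^ 2)]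

lemma rpow_one_fourth_mul_sq_eq {n : ℝ} (hn : 0 < n) :
    (n ^ 2 * π ^ 2) ^ (1 / 4 : ℝ) * (√2 / (n * π)) ^ 2
      = 2 / π ^ (3 / 2 : ℝ) * n ^ (-(3 / 2) : ℝ) := by
  have hm : 0 < n * π := mul_pos hn pi_pos
  rw [← mul_pow, ← rpow_natCast, ← rpow_mul hm.le, div_pow, sq_sqrt zero_le_two,
    ← rpow_natCast (n * π), mul_div_assoc', mul_comm, mul_div_assoc, ← rpow_sub hm,
    mul_rpow hn.le pi_pos.le, show ((2 : ℕ) : ℝ) * (1 / 4) - ((2 : ℕ) : ℝ) = -(3 / 2) by norm_num,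
    rpow_neg pi_pos.le]
  ring

lemma summable_and_tsum_rpow_one_fourth_mul_sq_le {x : ℝ} (hx : 0 < x) :
    (Summable fun k : ℕ =>
        (((k : ℝ) + x + 1) ^ 2 * π ^ 2) ^ (1 / 4 : ℝ) * (√2 / (((k : ℝ) + x + 1) * π)) ^ 2) ∧
      ∑' k : ℕ, (((k : ℝ) + x + 1) ^ 2 * π ^ 2) ^ (1 / 4 : ℝ) * (√2 / (((k : ℝ) + x + 1) * π)) ^ 2
        ≤ 4 / (√x * π ^ (3 / 2 : ℝ)) := by
  have hcoeff : ∀ k : ℕ,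
      (((k : ℝ) + x + 1) ^ 2 * π ^ 2) ^ (1 / 4 : ℝ) * (√2 / (((k : ℝ) + x + 1) * π)) ^ 2
        = 2 / π ^ (3 / 2 : ℝ) * ((k : ℝ) + x + 1) ^ (-(3 / 2) : ℝ) :=
    fun k => rpow_one_fourth_mul_sq_eq (by positivity)
  obtain ⟨hsum, hle⟩ := summable_and_tsum_rpow_neg_three_halves_le hx
  simp only [hcoeff, tsum_mul_left]
  refine ⟨hsum.mul_left _, ?_⟩
  calc 2 / π ^ (3 / 2 : ℝ) * ∑' k : ℕ, ((k : ℝ) + x + 1) ^ (-(3 / 2) : ℝ)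
      ≤ 2 / π ^ (3 / 2 : ℝ) * (2 / √x) := by gcongr
    _ = 4 / (√x * π ^ (3 / 2 : ℝ)) := by field_simp; ring

lemma lyapunov_tail_le {α c lam₀ ζ κ B : ℝ} {lam b w : ℕ → ℝ} (hα : 0 < α) (h₁ : 1 ≤ lam₀)
    (hmono : 3 / (8 * α) ≤ lam₀ ^ (1 / 4 : ℝ))
    (hgap : 0 ≤ lam₀ - c - 1 / (2 * α) * lam₀ ^ (3 / 4 : ℝ))
    (hge : ∀ k, lam₀ ≤ lam k)
    (hw : Summable fun k => lam k ^ 2 * w k ^ 2) (hζ : ζ ^ 2 ≤ ∑' k, lam k * w k ^ 2)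
    (hcoeff : Summable fun k => lam k ^ (1 / 4 : ℝ) * b k ^ 2)
    (hB : ∑' k, lam k ^ (1 / 4 : ℝ) * b k ^ 2 ≤ B) :
    2 * ∑' k, (-lam k ^ 2 + c * lam k) * w k ^ 2 - 2 * ∑' k, lam k * w k * b k * κ
      ≤ -2 * (lam₀ - c - 1 / (2 * α) * lam₀ ^ (3 / 4 : ℝ)) * ζ ^ 2 + α * κ ^ 2 * B := by
  set C := lam₀ - c - 1 / (2 * α) * lam₀ ^ (3 / 4 : ℝ)
  have hone : ∀ k, 1 ≤ lam k := fun k => h₁.trans (hge k)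
  have hlam_w : Summable fun k => lam k * w k ^ 2 :=
    hw.of_nonneg_of_le (fun k => mul_nonneg (zero_le_one.trans (hone k)) (sq_nonneg _))
      fun k => by gcongr; nlinarith [hone k]
  have hbκ : Summable fun k => (b k * κ) ^ 2 := by
    refine (hcoeff.mul_right (κ ^ 2)).of_nonneg_of_le (fun k => by positivity) fun k => ?_
    rw [mul_pow]
    gcongr
    exact le_mul_of_one_le_left (sq_nonneg _) (one_le_rpow (hone k) (by norm_num))
  have hquad : Summable fun k => (-lam k ^ 2 + c * lam k) * w k ^ 2 :=
    (hw.neg.add (hlam_w.mul_left c)).congr fun k => by ring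
  have hcross : Summable fun k => lam k * w k * b k * κ :=
    (Summable.mul_of_summable_sq (f := fun k => lam k * w k) (hw.congr fun k => by ring)
      hbκ).congr fun k => by ring
  calc _ = ∑' k, (2 * ((-lam k ^ 2 + c * lam k) * w k ^ 2) - 2 * (lam k * w k * b k * κ)) := by
        rw [Summable.tsum_sub (hquad.mul_left 2) (hcross.mul_left 2), tsum_mul_left, tsum_mul_left]
    _ ≤ ∑' k, (-2 * C * (lam k * w k ^ 2) + α * κ ^ 2 * (lam k ^ (1 / 4 : ℝ) * b k ^ 2)) :=
        Summable.tsum_le_tsum (fun k => mode_term_le hα (zero_le_one.trans h₁) (hge k) hmono _ _ _)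
          ((hquad.mul_left 2).sub (hcross.mul_left 2)) ((hlam_w.mul_left _).add (hcoeff.mul_left _))
    _ = -2 * C * ∑' k, lam k * w k ^ 2 + α * κ ^ 2 * ∑' k, lam k ^ (1 / 4 : ℝ) * b k ^ 2 := by
        rw [Summable.tsum_add (hlam_w.mul_left _) (hcoeff.mul_left _), tsum_mul_left,
          tsum_mul_left]
    _ ≤ -2 * C * ζ ^ 2 + α * κ ^ 2 * B :=
        add_le_add (mul_le_mul_of_nonpos_left hζ (by linarith))
          (mul_le_mul_of_nonneg_left hB (by positivity))

/-- Tail estimate of the Lyapunov analysis: with `λ_n = n²π²`, `b_n = √2/(nπ)`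
(here index `k` stands for `n = N+1+k`), under
`λ_{N+1} − a − δ − (1/(2α₁))λ_{N+1}^{3/4} ≥ 0` and `λ_{N+1}^{1/4} ≥ 3/(8α₁)`,
for any `κ, ζ` and reals `(w_n)_{n>N}` with `∑ λ_n² w_n² < ∞` and `ζ² ≤ ∑ λ_n w_n²`,
`2∑(−λ_n² + (a+δ)λ_n)w_n² − 2∑ λ_n w_n b_n κ
  ≤ −2(λ_{N+1} − a − δ − (1/(2α₁))λ_{N+1}^{3/4})ζ² + (4α₁/(√N π^{3/2}))κ²`. -/
theorem stmt_6 (N : ℕ+) (a δ α₁ : ℝ) (hα₁ : 0 < α₁)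
    (hpos : ((N : ℝ) + 1) ^ 2 * π ^ 2 - a - δ
        - (1 / (2 * α₁)) * ((((N : ℝ) + 1) ^ 2 * π ^ 2) ^ ((3 : ℝ) / 4)) ≥ 0)
    (hmono : ((((N : ℝ) + 1) ^ 2 * π ^ 2) ^ ((1 : ℝ) / 4)) ≥ 3 / (8 * α₁))
    (κ ζ : ℝ) (w : ℕ → ℝ)
    (hw : Summable fun k : ℕ => ((((k : ℝ) + (N : ℝ) + 1) ^ 2 * π ^ 2) ^ 2) * (w k) ^ 2)
    (hζ : ζ ^ 2 ≤ ∑' k : ℕ, (((k : ℝ) + (N : ℝ) + 1) ^ 2 * π ^ 2) * (w k) ^ 2) :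
    2 * (∑' k : ℕ, (-((((k : ℝ) + (N : ℝ) + 1) ^ 2 * π ^ 2) ^ 2)
          + (a + δ) * (((k : ℝ) + (N : ℝ) + 1) ^ 2 * π ^ 2)) * (w k) ^ 2)
      - 2 * (∑' k : ℕ, (((k : ℝ) + (N : ℝ) + 1) ^ 2 * π ^ 2) * w k *
          (Real.sqrt 2 / (((k : ℝ) + (N : ℝ) + 1) * π)) * κ)
    ≤ -2 * (((N : ℝ) + 1) ^ 2 * π ^ 2 - a - δ
          - (1 / (2 * α₁)) * ((((N : ℝ) + 1) ^ 2 * π ^ 2) ^ ((3 : ℝ) / 4))) * ζ ^ 2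
      + (4 * α₁ / (Real.sqrt (N : ℝ) * π ^ ((3 : ℝ) / 2))) * κ ^ 2 := by
  have hN : (0 : ℝ) < N := by exact_mod_cast N.pos
  have hge : ∀ k : ℕ, ((N : ℝ) + 1) ^ 2 * π ^ 2 ≤ ((k : ℝ) + N + 1) ^ 2 * π ^ 2 := fun k => by
    gcongr; linarith [(k.cast_nonneg : (0 : ℝ) ≤ k)]
  have hone : 1 ≤ ((N : ℝ) + 1) ^ 2 * π ^ 2 :=
    one_le_mul_of_one_le_of_one_le (one_le_pow₀ (by linarith))
      (one_le_pow₀ (by linarith [pi_gt_three]))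
  obtain ⟨hcoeff, hB⟩ := summable_and_tsum_rpow_one_fourth_mul_sq_le hN
  refine (lyapunov_tail_le (c := a + δ) (κ := κ) hα₁ hone hmono (by linarith) hge hw hζ
    hcoeff hB).trans_eq ?_
  ring
end

section
/- Let N₀ be a positive integer, a ∈ ℝ, λ_n = n²π² and b_n = √2/(nπ) ≠ 0 for 1 ≤ n ≤ N₀. Define Ã₀ ∈ ℝ^{(N₀+1)×(N₀+1)} as the block matrix with zero first row, first column (0, a·b₁, …, a·b_{N₀})ᵀ, and lower-right block A₀ = diag(−λ₁ + a, …, −λ_{N₀} + a); define B̃₀ = (1, −b₁, …, −b_{N₀})ᵀ ∈ ℝ^{N₀+1}. Then the pair (Ã₀, B̃₀) is controllable; equivalently (Hautus test), for every μ ∈ ℝ and every y ∈ ℝ^{N₀+1}, if yᵀÃ₀ = μ·yᵀ and yᵀB̃₀ = 0 then y = 0. -/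
open Real Matrix

/-!
Write `y = (y₀, z)`. Off the input coordinate, `yᵀÃ₀ = μ yᵀ` reads `zᵢ(a − λᵢ) = μ zᵢ`; as the
`λᵢ` are distinct, `z` is supported on a single index `k` with `μ = a − λ_k`. The input
coordinate gives `a b_k z_k = μ y₀` and `yᵀB̃₀ = 0` gives `y₀ = b_k z_k`, so `λ_k b_k z_k = 0`,
whence `z_k = 0` and then `y₀ = 0`.
-/

section Extension

variable {K ι : Type*} [Field K] [Fintype ι] [DecidableEq ι]

/-- `i₀` indexes the extended input state `u`, the other indices the modes. -/
def extensionMatrix (i₀ : ι) (a : K) (lam b : ι → K) : Matrix ι ι K :=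
  Matrix.of fun i j =>
    if i = i₀ then 0 else if j = i₀ then a * b i else if i = j then -lam i + a else 0

def extensionInput (i₀ : ι) (b : ι → K) : ι → K := fun i => if i = i₀ then 1 else -b i

variable (i₀ : ι) (a : K) (lam b : ι → K) (y : ι → K)

theorem vecMul_extensionMatrix_of_ne {j : ι} (hj : j ≠ i₀) :
    vecMul y (extensionMatrix i₀ a lam b) j = y j * (-lam j + a) := by
  rw [vecMul, dotProduct, Finset.sum_eq_single j]
  · simp [extensionMatrix, hj]
  · intro i _ hij
    by_cases hi : i = i₀ <;> simp [extensionMatrix, hi, hj, hij]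
  · simp

theorem vecMul_extensionMatrix_self :
    vecMul y (extensionMatrix i₀ a lam b) i₀ = a * ∑ i ∈ Finset.univ.erase i₀, y i * b i := by
  rw [vecMul, dotProduct, ← Finset.add_sum_erase _ _ (Finset.mem_univ i₀), Finset.mul_sum]
  simp only [extensionMatrix, of_apply, if_true, mul_zero, zero_add]
  refine Finset.sum_congr rfl fun i hi => ?_
  rw [if_neg (Finset.ne_of_mem_erase hi)]
  ring

theorem dotProduct_extensionInput :
    y ⬝ᵥ extensionInput i₀ b = y i₀ - ∑ i ∈ Finset.univ.erase i₀, y i * b i := by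
  rw [dotProduct, ← Finset.add_sum_erase _ _ (Finset.mem_univ i₀), sub_eq_add_neg,
    ← Finset.sum_neg_distrib]
  simp only [extensionInput, if_true, mul_one]
  refine congrArg _ (Finset.sum_congr rfl fun i hi => ?_)
  rw [if_neg (Finset.ne_of_mem_erase hi)]
  ring

theorem hautus_extensionMatrix_extensionInput (hlam : Set.InjOn lam {i₀}ᶜ)
    (hlam₀ : ∀ i ≠ i₀, lam i ≠ 0) (hb : ∀ i ≠ i₀, b i ≠ 0) (μ : K)
    (hy : vecMul y (extensionMatrix i₀ a lam b) = μ • y)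
    (hyB : y ⬝ᵥ extensionInput i₀ b = 0) : y = 0 := by
  have hmode : ∀ j ≠ i₀, y j * (-lam j + a) = μ * y j := fun j hj => by
    rw [← vecMul_extensionMatrix_of_ne i₀ a lam b y hj, hy, Pi.smul_apply, smul_eq_mul]
  have hinput : a * ∑ i ∈ Finset.univ.erase i₀, y i * b i = μ * y i₀ := by
    rw [← vecMul_extensionMatrix_self i₀ a lam b y, hy, Pi.smul_apply, smul_eq_mul]
  have hy₀ : y i₀ = ∑ i ∈ Finset.univ.erase i₀, y i * b i := by
    rw [dotProduct_extensionInput] at hyB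
    exact sub_eq_zero.mp hyB
  by_cases hz : ∀ j ≠ i₀, y j = 0
  · have hsum : ∑ i ∈ Finset.univ.erase i₀, y i * b i = 0 :=
      Finset.sum_eq_zero fun i hi => by rw [hz i (Finset.ne_of_mem_erase hi), zero_mul]
    funext j
    by_cases hj : j = i₀
    · rw [hj, hy₀, hsum, Pi.zero_apply]
    · exact hz j hj
  push Not at hz
  obtain ⟨k, hk, hyk⟩ := hz
  have hμ : μ = -lam k + a :=
    (mul_left_cancel₀ hyk (by rw [hmode k hk, mul_comm])).symm
  have hsupp : ∀ j ∈ Finset.univ.erase i₀, j ≠ k → y j * b j = 0 := fun j hj hjk => by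
    have hj₀ := Finset.ne_of_mem_erase hj
    have hdiff : lam j ≠ lam k := fun h => hjk (hlam hj₀ hk h)
    have : y j * (lam k - lam j) = 0 := by linear_combination hmode j hj₀ + hμ * y j
    rw [(mul_eq_zero.mp this).resolve_right (sub_ne_zero.mpr hdiff.symm), zero_mul]
  have hsum : ∑ i ∈ Finset.univ.erase i₀, y i * b i = y k * b k :=
    Finset.sum_eq_single_of_mem k (Finset.mem_erase.mpr ⟨hk, Finset.mem_univ k⟩) hsupp
  have : lam k * b k * y k = 0 := by
    rw [hsum] at hinput hy₀
    linear_combination hinput + y i₀ * hμ + (a - lam k) * hy₀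
  exact absurd this (mul_ne_zero (mul_ne_zero (hlam₀ k hk) (hb k hk)) hyk)

end Extension

theorem stmt_9_general (N₀ : ℕ) (a : ℝ)
    (A : Matrix (Fin (N₀ + 1)) (Fin (N₀ + 1)) ℝ)
    (hA : A = Matrix.of fun i j : Fin (N₀ + 1) =>
      if i = 0 then 0
      else if j = 0 then a * (Real.sqrt 2 / (((i : ℕ) : ℝ) * π))
      else if i = j then -((((i : ℕ) : ℝ)) ^ 2 * π ^ 2) + a
      else 0)
    (B : Fin (N₀ + 1) → ℝ)
    (hB : B = fun i : Fin (N₀ + 1) =>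
      if i = 0 then 1 else -(Real.sqrt 2 / (((i : ℕ) : ℝ) * π))) :
    ∀ (μ : ℝ) (y : Fin (N₀ + 1) → ℝ), Matrix.vecMul y A = μ • y → y ⬝ᵥ B = 0 → y = 0 := by
  subst hA hB
  intro μ y hy hyB
  have hi : ∀ i : Fin (N₀ + 1), i ≠ 0 → ((i : ℕ) : ℝ) ≠ 0 := fun i hi =>
    Nat.cast_ne_zero.mpr (Fin.val_ne_zero_iff.mpr hi)
  refine hautus_extensionMatrix_extensionInput (0 : Fin (N₀ + 1)) a
    (fun i => ((i : ℕ) : ℝ) ^ 2 * π ^ 2) (fun i => Real.sqrt 2 / ((i : ℕ) * π)) y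
    ?_ (fun i h => by positivity [hi i h]) (fun i h => by positivity [hi i h]) μ hy hyB
  intro i _ j _ hij
  have hsq : (i : ℕ) ^ 2 = (j : ℕ) ^ 2 := by
    exact_mod_cast mul_right_cancel₀ (pow_ne_zero 2 pi_ne_zero) hij
  exact Fin.ext (Nat.pow_left_injective two_ne_zero hsq)

/-- With `Ã₀` the dynamic-extension matrix (zero first row, first column
`(0, ab₁, …, ab_{N₀})ᵀ`, lower-right block `diag(−λ₁+a, …, −λ_{N₀}+a)`) and
`B̃₀ = (1, −b₁, …, −b_{N₀})ᵀ`, where `λ_n = n²π²` and `b_n = √2/(nπ) ≠ 0`, the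
pair `(Ã₀, B̃₀)` is controllable: by the Hautus test, for every real `μ` and every
`y`, `yᵀÃ₀ = μyᵀ` and `yᵀB̃₀ = 0` imply `y = 0`. -/
theorem stmt_9 (N₀ : ℕ) (hN₀ : 0 < N₀) (a : ℝ)
    (A : Matrix (Fin (N₀ + 1)) (Fin (N₀ + 1)) ℝ)
    (hA : A = Matrix.of fun i j : Fin (N₀ + 1) =>
      if i = 0 then 0
      else if j = 0 then a * (Real.sqrt 2 / (((i : ℕ) : ℝ) * π))
      else if i = j then -((((i : ℕ) : ℝ)) ^ 2 * π ^ 2) + a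
      else 0)
    (B : Fin (N₀ + 1) → ℝ)
    (hB : B = fun i : Fin (N₀ + 1) =>
      if i = 0 then 1 else -(Real.sqrt 2 / (((i : ℕ) : ℝ) * π))) :
    ∀ (μ : ℝ) (y : Fin (N₀ + 1) → ℝ), Matrix.vecMul y A = μ • y → y ⬝ᵥ B = 0 → y = 0 :=
  stmt_9_general N₀ a A hA B hB
end

section
/- (Halanay's inequality for Lyapunov functions with non-increasing jumps.) Let s₀ < s₁ < … < s_k < … with lim_{k→∞} s_k = ∞ and s_{k+1} − s_k ≤ h for all k and some h > 0. For each k, let s_k = t^{(k)}_0 < t^{(k)}_1 < … < t^{(k)}_{n_k} = s_{k+1} be a finite refinement. Let W : [s₀, ∞) → [0, ∞) be absolutely continuous on each interval [t^{(k)}_j, t^{(k)}_{j+1}) and satisfy lim_{t↑t^{(k)}_j} W(t) ≥ W(t^{(k)}_j) at every partition point (jumps do not increase W). Let δ₀ > δ₁ > 0 and suppose that for every k and every 0 ≤ j ≤ n_k − 1, Ẇ(t) ≤ −2δ₀·W(t) + 2δ₁·sup_{s_k ≤ θ ≤ t} W(θ) for almost all t ∈ [t^{(k)}_j, t^{(k)}_{j+1}).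 Let δ_τ > 0 be the unique solution of δ_τ = δ₀ − δ₁·e^{2δ_τ h}. Then W(t) ≤ e^{−2δ_τ·(t − s₀)}·W(s₀) for all t ≥ s₀. -/
/-!
Compare `W` with `B x = C e^{-2δτ(x - s₀)}` for `C > W s₀`. As long as `W < B` on `[s₀, θ]`, the
delayed term obeys `δ₁ sup_{[s_k, θ]} W ≤ δ₁ B(s_k) ≤ δ₁ e^{2δτ h} B θ = (δ₀ - δτ) B θ`, so
`g = B - W` satisfies `g' ≥ -2δ₀ g` almost everywhere on each piece. At a first time `T` where `W`
reaches `B`, the left limit of `W` is at least `W T ≥ B T` since jumps do not increase `W`; hence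
`g → 0` as `x ↑ T`, which the backward Gronwall estimate rules out for `g > 0`. Letting `C ↓ W s₀`
gives the bound.
-/

open Real MeasureTheory Filter Set Topology

theorem Nat.exists_lt_and_not_succ {P : ℕ → Prop} {N : ℕ} (h0 : P 0) (hN : ¬ P N) :
    ∃ i < N, P i ∧ ¬ P (i + 1) := by
  induction N with
  | zero => exact absurd h0 hN
  | succ N ih =>
    by_cases hPN : P N
    · exact ⟨N, N.lt_succ_self, hPN, hN⟩
    · obtain ⟨i, hi, hPi⟩ := ih hPN
      exact ⟨i, hi.trans N.lt_succ_self, hPi⟩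

structure IsSampledPartition (s : ℕ → ℝ) (n : ℕ → ℕ) (t : ℕ → ℕ → ℝ) : Prop where
  monotone : Monotone s
  tendsto_atTop : Tendsto s atTop atTop
  t_zero : ∀ k, t k 0 = s k
  t_last : ∀ k, t k (n k) = s (k + 1)
  t_lt : ∀ k, ∀ i j : ℕ, i < j → j ≤ n k → t k i < t k j

namespace IsSampledPartition

variable {s : ℕ → ℝ} {n : ℕ → ℕ} {t : ℕ → ℕ → ℝ}

theorem t_le (P : IsSampledPartition s n t) {k i j : ℕ} (hij : i ≤ j) (hj : j ≤ n k) :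
    t k i ≤ t k j :=
  hij.eq_or_lt.elim (fun h => h ▸ le_rfl) fun h => (P.t_lt k i j h hj).le

theorem Ico_subset (P : IsSampledPartition s n t) {k j : ℕ} (hj : j < n k) :
    Ico (t k j) (t k (j + 1)) ⊆ Ico (s k) (s (k + 1)) := by
  rw [← P.t_zero k, ← P.t_last k]
  exact Ico_subset_Ico (P.t_le j.zero_le hj.le) (P.t_le hj le_rfl)

theorem exists_piece (P : IsSampledPartition s n t) {p : ℝ → Prop} (h0 : p (s 0))
    (hN : ∃ N, ¬ p (s N)) : ∃ k, ∃ j < n k, p (t k j) ∧ ¬ p (t k (j + 1)) := by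
  obtain ⟨N, hN⟩ := hN
  obtain ⟨k, -, hk, hk'⟩ := Nat.exists_lt_and_not_succ (P := fun k => p (s k)) h0 hN
  obtain ⟨j, hj, hpj⟩ := Nat.exists_lt_and_not_succ (P := fun j => p (t k j)) (N := n k)
    (by simpa [P.t_zero] using hk) (by simpa [P.t_last] using hk')
  exact ⟨k, j, hj, hpj⟩

theorem exists_mem_Ico (P : IsSampledPartition s n t) {x : ℝ} (hx : s 0 ≤ x) :
    ∃ k, ∃ j < n k, x ∈ Ico (t k j) (t k (j + 1)) := by
  obtain ⟨N, hN⟩ := (P.tendsto_atTop.eventually_gt_atTop x).exists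
  simpa using P.exists_piece (p := (· ≤ x)) hx ⟨N, hN.not_ge⟩

theorem exists_mem_Ioc (P : IsSampledPartition s n t) {x : ℝ} (hx : s 0 < x) :
    ∃ k, ∃ j < n k, x ∈ Ioc (t k j) (t k (j + 1)) := by
  obtain ⟨N, hN⟩ := (P.tendsto_atTop.eventually_ge_atTop x).exists
  simpa using P.exists_piece (p := (· < x)) hx ⟨N, hN.not_gt⟩

end IsSampledPartition

def HasIntegralFormOn (W W' : ℝ → ℝ) (a b : ℝ) : Prop :=
  ∀ x ∈ Ico a b, IntervalIntegrable W' volume a x ∧ W x = W a + ∫ τ in a..x, W' τ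

namespace HasIntegralFormOn

variable {W W' : ℝ → ℝ} {a b : ℝ}

theorem continuousOn (hW : HasIntegralFormOn W W' a b) : ContinuousOn W (Ico a b) := by
  intro x ⟨hax, hxb⟩
  obtain ⟨x', hxx', hx'b⟩ := exists_between hxb
  have hax' : a ≤ x' := hax.trans hxx'.le
  have hprim : ContinuousOn (fun y => W a + ∫ τ in a..y, W' τ) (Icc a x') := by
    have := intervalIntegral.continuousOn_primitive_interval (μ := volume) (a := a) (b := x')
      (by
        rw [uIcc_of_le hax']
        exact (intervalIntegrable_iff_integrableOn_Icc_of_le hax').1 (hW x' ⟨hax', hx'b⟩).1)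
    rw [uIcc_of_le hax'] at this
    exact continuousOn_const.add this
  have hEq : EqOn W (fun y => W a + ∫ τ in a..y, W' τ) (Icc a x') := fun y hy =>
    (hW y ⟨hy.1, hy.2.trans_lt hx'b⟩).2
  refine ((hprim.congr hEq) x ⟨hax, hxx'.le⟩).mono_of_mem_nhdsWithin ?_
  exact mem_of_superset (inter_mem_nhdsWithin _ (Iic_mem_nhds hxx')) fun y hy => ⟨hy.1.1, hy.2⟩

theorem sub_eq_integral (hW : HasIntegralFormOn W W' a b) {x y : ℝ} (hax : a ≤ x) (hxy : x ≤ y)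
    (hyb : y < b) : IntervalIntegrable W' volume x y ∧ W y - W x = ∫ τ in x..y, W' τ := by
  obtain ⟨hix, hWx⟩ := hW x ⟨hax, hxy.trans_lt hyb⟩
  obtain ⟨hiy, hWy⟩ := hW y ⟨hax.trans hxy, hyb⟩
  refine ⟨(hix.symm.trans hiy), ?_⟩
  rw [hWx, hWy, add_sub_add_left_eq_sub, intervalIntegral.integral_interval_sub_left hiy hix]

theorem continuousWithinAt_Ici (hW : HasIntegralFormOn W W' a b) {x : ℝ} (hx : x ∈ Ico a b) :
    ContinuousWithinAt W (Ici x) x :=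
  (hW.continuousOn x hx).mono_of_mem_nhdsWithin
    (mem_of_superset (Ico_mem_nhdsGE hx.2) (Ico_subset_Ico_left hx.1))

theorem exists_tendsto_nhdsLT_ge (hW : HasIntegralFormOn W W' a b)
    (hjump : ∃ L, Tendsto W (𝓝[<] b) (𝓝 L) ∧ W b ≤ L) {T : ℝ} (hT : T ∈ Ioc a b) :
    ∃ L, Tendsto W (𝓝[<] T) (𝓝 L) ∧ W T ≤ L := by
  rcases hT.2.eq_or_lt with rfl | hTb
  · exact hjump
  · refine ⟨W T, ((hW.continuousOn T ⟨hT.1.le, hTb⟩).mono_of_mem_nhdsWithin ?_).tendsto, le_rfl⟩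
    exact mem_of_superset (Ioo_mem_nhdsLT hT.1) fun y hy => ⟨hy.1.le, hy.2.trans hTb⟩

theorem sub_le_sub_add_integral (hW : HasIntegralFormOn W W' a b) {B B' : ℝ → ℝ} {c x y : ℝ}
    (hB : ∀ θ, HasDerivAt B (B' θ) θ) (hB' : Continuous B')
    (hle : ∀ᵐ θ, θ ∈ Icc x y → W' θ ≤ B' θ + c * (B θ - W θ))
    (hax : a ≤ x) (hxy : x ≤ y) (hyb : y < b) :
    B x - W x ≤ B y - W y + c * ∫ θ in x..y, (B θ - W θ) := by
  obtain ⟨hW'int, hWsub⟩ := hW.sub_eq_integral hax hxy hyb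
  have hBcont : Continuous B := continuous_iff_continuousAt.2 fun θ => (hB θ).continuousAt
  have hgap : IntervalIntegrable (fun θ => B θ - W θ) volume x y := by
    refine (hBcont.continuousOn.sub (hW.continuousOn.mono ?_)).intervalIntegrable
    rw [uIcc_of_le hxy]
    exact Icc_subset_Ico hax hyb
  have hB'int : IntervalIntegrable B' volume x y := hB'.intervalIntegrable x y
  have hBsub : B y - B x = ∫ θ in x..y, B' θ :=
    (intervalIntegral.integral_eq_sub_of_hasDerivAt (fun θ _ => hB θ) hB'int).symm
  have hmono : ∫ θ in x..y, W' θ ≤ ∫ θ in x..y, (B' θ + c * (B θ - W θ)) :=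
    intervalIntegral.integral_mono_ae_restrict hxy hW'int (hB'int.add (hgap.const_mul c))
      ((ae_restrict_iff' measurableSet_Icc).2 hle)
  rw [intervalIntegral.integral_add hB'int (hgap.const_mul c),
    intervalIntegral.integral_const_mul] at hmono
  linarith

end HasIntegralFormOn

theorem forall_lt_of_continuousWithinAt_Ici {α β : Type*} [ConditionallyCompleteLinearOrder α]
    [TopologicalSpace α] [OrderTopology α] [LinearOrder β] [TopologicalSpace β]
    [OrderClosedTopology β] {f g : α → β} {a : α}
    (hf : ∀ x, a ≤ x → ContinuousWithinAt f (Ici x) x)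
    (hg : ∀ x, a ≤ x → ContinuousWithinAt g (Ici x) x) (ha : f a < g a)
    (hstep : ∀ T, a < T → (∀ x ∈ Ico a T, f x < g x) → f T < g T) :
    ∀ x, a ≤ x → f x < g x := by
  by_contra! hne
  set A := {x | a ≤ x ∧ g x ≤ f x}
  have hA : A.Nonempty := hne
  have hbdd : BddBelow A := ⟨a, fun x hx => hx.1⟩
  have haT : a ≤ sInf A := le_csInf hA fun x hx => hx.1
  have hbelow : ∀ x ∈ Ico a (sInf A), f x < g x := fun x hx =>
    not_le.1 fun h => hx.2.not_ge (csInf_le hbdd ⟨hx.1, h⟩)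
  have hAT : A ⊆ Ici (sInf A) := fun x hx => csInf_le hbdd hx
  have hT : g (sInf A) ≤ f (sInf A) :=
    ContinuousWithinAt.closure_le (csInf_mem_closure hA hbdd) ((hg _ haT).mono hAT)
      ((hf _ haT).mono hAT) fun x hx => hx.2
  rcases haT.eq_or_lt with haT | haT
  · exact hT.not_gt (haT ▸ ha)
  · exact hT.not_gt (hstep _ haT hbelow)

theorem pos_of_le_add_integral {g : ℝ → ℝ} {a T c l : ℝ} (haT : a < T) (hc : 0 ≤ c)
    (hpos : ∀ x ∈ Ico a T, 0 < g x)
    (hg : ∀ x y, a ≤ x → x ≤ y → y < T → g x ≤ g y + c * ∫ θ in x..y, g θ)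
    (hl : Tendsto g (𝓝[<] T) (𝓝 l)) : 0 < l := by
  by_contra! hl0
  have hnear : {y | a ≤ y ∧ c * (T - y) ≤ 1 / 2 ∧ g y ≤ 1} ∈ 𝓝[<] T := by
    have hcT : ∀ᶠ y in 𝓝 T, c * (T - y) < 1 / 2 :=
      ContinuousAt.eventually_lt (by fun_prop) continuousAt_const (by simp)
    filter_upwards [Ioo_mem_nhdsLT haT, hl.eventually (gt_mem_nhds (hl0.trans_lt one_pos)),
      eventually_nhdsWithin_of_eventually_nhds hcT] with y hy hgy hcy
    exact ⟨hy.1.le, hcy.le, hgy.le⟩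
  obtain ⟨x₀, hx₀T, hsub⟩ := mem_nhdsLT_iff_exists_Ico_subset.1 hnear
  set M := sSup (g '' Ico x₀ T)
  have hbdd : BddAbove (g '' Ico x₀ T) := ⟨1, by rintro _ ⟨y, hy, rfl⟩; exact (hsub hy).2.2⟩
  have hle_M : ∀ y ∈ Ico x₀ T, g y ≤ M := fun y hy => le_csSup hbdd (mem_image_of_mem g hy)
  have hx₀ : x₀ ∈ Ico x₀ T := ⟨le_rfl, hx₀T⟩
  have hM : 0 < M := (hpos x₀ ⟨(hsub hx₀).1, hx₀T⟩).trans_le (hle_M x₀ hx₀)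
  -- Letting `y ↑ T` in `g x ≤ g y + c (y - x) M` gives `g x ≤ l + M / 2 ≤ M / 2`.
  have hhalf : ∀ x ∈ Ico x₀ T, g x ≤ M / 2 := by
    intro x hx
    have hev : ∀ᶠ y in 𝓝[<] T, g x ≤ g y + M / 2 := by
      filter_upwards [Ioo_mem_nhdsLT hx.2] with y hy
      have hint : ∫ θ in x..y, g θ ≤ M * (y - x) := by
        have := intervalIntegral.norm_integral_le_of_norm_le_const (f := g) (C := M) fun θ hθ => by
          rw [uIoc_of_le hy.1.le] at hθ
          have hθ' : θ ∈ Ico x₀ T := ⟨hx.1.trans hθ.1.le, hθ.2.trans_lt hy.2⟩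
          rw [Real.norm_of_nonneg (hpos θ ⟨(hsub hθ').1, hθ'.2⟩).le]
          exact hle_M θ hθ'
        rw [abs_of_nonneg (sub_nonneg.2 hy.1.le)] at this
        exact (le_abs_self _).trans this
      have hcx : c * (y - x) ≤ 1 / 2 :=
        (mul_le_mul_of_nonneg_left (by linarith [hy.2]) hc).trans (hsub hx).2.1
      nlinarith [hg x y (hsub hx).1 hy.1.le hy.2]
    linarith [ge_of_tendsto (hl.add_const (M / 2)) hev]
  have : M ≤ M / 2 := csSup_le ⟨g x₀, mem_image_of_mem g hx₀⟩ (by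
    rintro _ ⟨x, hx, rfl⟩
    exact hhalf x hx)
  linarith

theorem sSup_image_Icc_le_exp {W : ℝ → ℝ} {C δ h u θ x₀ : ℝ} (hC : 0 ≤ C) (hδ : 0 ≤ δ)
    (huθ : u ≤ θ) (hθ : θ - u ≤ h) (hW : ∀ σ ∈ Icc u θ, W σ ≤ C * exp (-2 * δ * (σ - x₀))) :
    sSup (W '' Icc u θ) ≤ exp (2 * δ * h) * (C * exp (-2 * δ * (θ - x₀))) := by
  refine csSup_le ⟨W u, mem_image_of_mem W ⟨le_rfl, huθ⟩⟩ ?_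
  rintro _ ⟨σ, hσ, rfl⟩
  calc W σ ≤ C * exp (-2 * δ * (σ - x₀)) := hW σ hσ
    _ ≤ C * exp (-2 * δ * (u - x₀)) :=
      mul_le_mul_of_nonneg_left (exp_le_exp.2 (by nlinarith [hσ.1])) hC
    _ = exp (2 * δ * (θ - u)) * (C * exp (-2 * δ * (θ - x₀))) := by
      rw [mul_left_comm, ← exp_add]; ring_nf
    _ ≤ exp (2 * δ * h) * (C * exp (-2 * δ * (θ - x₀))) := by gcongr

theorem lt_exp_of_forall_Ico_lt {s : ℕ → ℝ} {n : ℕ → ℕ} {t : ℕ → ℕ → ℝ} {W W' : ℝ → ℝ}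
    {h δ₀ δ₁ δτ C T : ℝ} (P : IsSampledPartition s n t) (hs_gap : ∀ k, s (k + 1) - s k ≤ h)
    (hAC : ∀ k, ∀ j < n k, HasIntegralFormOn W W' (t k j) (t k (j + 1)))
    (hjump : ∀ k, ∀ j < n k,
      ∃ L, Tendsto W (𝓝[<] (t k (j + 1))) (𝓝 L) ∧ W (t k (j + 1)) ≤ L)
    (hineq : ∀ k, ∀ j < n k, ∀ᵐ x, x ∈ Ico (t k j) (t k (j + 1)) →
      W' x ≤ -2 * δ₀ * W x + 2 * δ₁ * sSup (W '' Icc (s k) x))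
    (hδ₁ : 0 ≤ δ₁) (hδτ : 0 ≤ δτ) (hδτ_eq : δτ = δ₀ - δ₁ * exp (2 * δτ * h)) (hC : 0 ≤ C)
    (hT : s 0 < T) (hlt : ∀ x ∈ Ico (s 0) T, W x < C * exp (-2 * δτ * (x - s 0))) :
    W T < C * exp (-2 * δτ * (T - s 0)) := by
  set B := fun x => C * exp (-2 * δτ * (x - s 0))
  obtain ⟨k, j, hj, hTkj⟩ := P.exists_mem_Ioc hT
  obtain ⟨L, hL, hWL⟩ := (hAC k j hj).exists_tendsto_nhdsLT_ge (hjump k j hj) hTkj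
  have hB : ∀ θ, HasDerivAt B (-2 * δτ * B θ) θ := fun θ => by
    have := (((hasDerivAt_id' θ).sub_const (s 0)).const_mul (-2 * δτ)).exp.const_mul C
    exact this.congr_deriv (by simp only [B]; ring)
  have hδ₀ : 0 ≤ 2 * δ₀ := by nlinarith [exp_pos (2 * δτ * h)]
  have hs₀ : s 0 ≤ t k j :=
    (P.monotone k.zero_le).trans ((P.t_zero k).symm.trans_le (P.t_le j.zero_le hj.le))
  have hderiv : ∀ᵐ θ, θ ∈ Ico (t k j) T → W' θ ≤ -2 * δτ * B θ + 2 * δ₀ * (B θ - W θ) := by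
    filter_upwards [hineq k j hj] with θ hθ hmem
    have hpiece : θ ∈ Ico (t k j) (t k (j + 1)) := ⟨hmem.1, hmem.2.trans_le hTkj.2⟩
    have hsk := P.Ico_subset hj hpiece
    have hsup := sSup_image_Icc_le_exp (h := h) hC hδτ hsk.1 (by linarith [hs_gap k, hsk.2])
      fun σ hσ => (hlt σ ⟨(P.monotone k.zero_le).trans hσ.1, hσ.2.trans_lt hmem.2⟩).le
    have hrate : δ₁ * (exp (2 * δτ * h) * B θ) = (δ₀ - δτ) * B θ := by
      linear_combination (B θ) * hδτ_eq
    nlinarith [hθ hpiece, mul_le_mul_of_nonneg_left hsup hδ₁]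
  have hgronwall : ∀ x y, t k j ≤ x → x ≤ y → y < T →
      B x - W x ≤ B y - W y + 2 * δ₀ * ∫ θ in x..y, (B θ - W θ) := fun x y hx hxy hy =>
    (hAC k j hj).sub_le_sub_add_integral hB (by fun_prop)
      (hderiv.mono fun θ hθle hθ => hθle ⟨hx.trans hθ.1, hθ.2.trans_lt hy⟩) hx hxy
      (hy.trans_le hTkj.2)
  have hBcont : Continuous B := by fun_prop
  have hlim := pos_of_le_add_integral hTkj.1 hδ₀
    (fun x hx => sub_pos.2 (hlt x ⟨hs₀.trans hx.1, hx.2⟩)) hgronwall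
    (((hBcont.tendsto T).mono_left nhdsWithin_le_nhds).sub hL)
  linarith

theorem stmt_10_general (h δ₀ δ₁ δτ : ℝ) (hδ₁ : 0 < δ₁)
    (s : ℕ → ℝ) (hs_mono : StrictMono s)
    (hs_tend : Tendsto s atTop atTop)
    (hs_gap : ∀ k : ℕ, s (k + 1) - s k ≤ h)
    (n : ℕ → ℕ)
    (t : ℕ → ℕ → ℝ)
    (ht0 : ∀ k, t k 0 = s k) (htn : ∀ k, t k (n k) = s (k + 1))
    (ht_mono : ∀ k, ∀ i j : ℕ, i < j → j ≤ n k → t k i < t k j)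
    (W W' : ℝ → ℝ)
    (hW_nonneg : ∀ x, s 0 ≤ x → 0 ≤ W x)
    (hAC : ∀ k, ∀ j < n k, ∀ x ∈ Set.Ico (t k j) (t k (j + 1)),
      IntervalIntegrable W' MeasureTheory.volume (t k j) x ∧
        W x = W (t k j) + ∫ τ in (t k j)..x, W' τ)
    (hjump : ∀ k, ∀ j ≤ n k, (k, j) ≠ (0, 0) →
      ∃ L : ℝ, Tendsto W (nhdsWithin (t k j) (Set.Iio (t k j))) (nhds L) ∧ W (t k j) ≤ L)
    (hineq : ∀ k, ∀ j < n k, ∀ᵐ x ∂MeasureTheory.volume,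
      x ∈ Set.Ico (t k j) (t k (j + 1)) →
        W' x ≤ -2 * δ₀ * W x + 2 * δ₁ * sSup (W '' Set.Icc (s k) x))
    (hδτ : 0 < δτ) (hδτ_eq : δτ = δ₀ - δ₁ * Real.exp (2 * δτ * h)) :
    ∀ x, s 0 ≤ x → W x ≤ Real.exp (-2 * δτ * (x - s 0)) * W (s 0) := by
  have P : IsSampledPartition s n t := ⟨hs_mono.monotone, hs_tend, ht0, htn, ht_mono⟩
  have hright : ∀ x, s 0 ≤ x → ContinuousWithinAt W (Ici x) x := fun x hx => by
    obtain ⟨k, j, hj, hxkj⟩ := P.exists_mem_Ico hx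
    exact HasIntegralFormOn.continuousWithinAt_Ici (hAC k j hj) hxkj
  have hlt : ∀ C, W (s 0) < C → ∀ x, s 0 ≤ x → W x < C * exp (-2 * δτ * (x - s 0)) := by
    intro C hC
    have hB : Continuous fun x => C * exp (-2 * δτ * (x - s 0)) := by fun_prop
    refine forall_lt_of_continuousWithinAt_Ici hright (fun x _ => hB.continuousWithinAt)
      (by simpa using hC) fun T hT => ?_
    exact lt_exp_of_forall_Ico_lt P hs_gap hAC (fun k j hj => hjump k (j + 1) hj (by simp))
      hineq hδ₁.le hδτ.le hδτ_eq ((hW_nonneg (s 0) le_rfl).trans hC.le) hT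
  intro x hx
  have hlim : Tendsto (fun C => C * exp (-2 * δτ * (x - s 0))) (𝓝[>] W (s 0))
      (𝓝 (W (s 0) * exp (-2 * δτ * (x - s 0)))) :=
    ((continuous_mul_const _).tendsto _).mono_left nhdsWithin_le_nhds
  rw [mul_comm]
  exact ge_of_tendsto hlim (eventually_nhdsWithin_of_forall fun C hC => (hlt C hC x hx).le)

/-- Halanay's inequality for Lyapunov functions with non-increasing jumps.
`s k` are the sampling instances (with gaps at most `h`, tending to `∞`), and for each
`k` the points `t k 0 = s k < t k 1 < … < t k (n k) = s (k+1)` form a finite refinement.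
`W ≥ 0` is absolutely continuous on each `[t k j, t k (j+1))` with a.e. derivative `W'`,
does not grow at the jump points, and satisfies the Halanay differential inequality
`W' ≤ −2δ₀ W + 2δ₁ sup_{[s k, ·]} W` a.e. on each of these intervals. If `δ₀ > δ₁ > 0`
and `δ_τ > 0` solves `δ_τ = δ₀ − δ₁ e^{2δ_τ h}`, then
`W(t) ≤ e^{−2δ_τ(t − s 0)} W(s 0)` for all `t ≥ s 0`. -/
theorem stmt_10 (h δ₀ δ₁ δτ : ℝ) (hh : 0 < h) (hδ₁ : 0 < δ₁) (hδ₀ : δ₁ < δ₀)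
    (s : ℕ → ℝ) (hs_mono : StrictMono s)
    (hs_tend : Tendsto s atTop atTop)
    (hs_gap : ∀ k : ℕ, s (k + 1) - s k ≤ h)
    (n : ℕ → ℕ) (hn : ∀ k, 1 ≤ n k)
    (t : ℕ → ℕ → ℝ)
    (ht0 : ∀ k, t k 0 = s k) (htn : ∀ k, t k (n k) = s (k + 1))
    (ht_mono : ∀ k, ∀ i j : ℕ, i < j → j ≤ n k → t k i < t k j)
    (W W' : ℝ → ℝ)
    (hW_nonneg : ∀ x, s 0 ≤ x → 0 ≤ W x)
    (hAC : ∀ k, ∀ j < n k, ∀ x ∈ Set.Ico (t k j) (t k (j + 1)),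
      IntervalIntegrable W' MeasureTheory.volume (t k j) x ∧
        W x = W (t k j) + ∫ τ in (t k j)..x, W' τ)
    (hjump : ∀ k, ∀ j ≤ n k, (k, j) ≠ (0, 0) →
      ∃ L : ℝ, Tendsto W (nhdsWithin (t k j) (Set.Iio (t k j))) (nhds L) ∧ W (t k j) ≤ L)
    (hineq : ∀ k, ∀ j < n k, ∀ᵐ x ∂MeasureTheory.volume,
      x ∈ Set.Ico (t k j) (t k (j + 1)) →
        W' x ≤ -2 * δ₀ * W x + 2 * δ₁ * sSup (W '' Set.Icc (s k) x))
    (hδτ : 0 < δτ) (hδτ_eq : δτ = δ₀ - δ₁ * Real.exp (2 * δτ * h)) :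
    ∀ x, s 0 ≤ x → W x ≤ Real.exp (-2 * δτ * (x - s 0)) * W (s 0) :=
  stmt_10_general h δ₀ δ₁ δτ hδ₁ s hs_mono hs_tend hs_gap n t ht0 htn ht_mono W W' hW_nonneg hAC
    hjump hineq hδτ hδτ_eq
end

section
/- Let N be a positive integer, a ∈ ℝ, δ > 0, α₁ > 0, λ_n = n²π², b_n = √2/(nπ). Let P ∈ ℝ^{(2N+1)×(2N+1)} be symmetric positive definite, F ∈ ℝ^{(2N+1)×(2N+1)}, 𝓛 ∈ ℝ^{2N+1} a column vector, K ∈ ℝ^{1×(2N+1)} a row vector. Set Φ = PF + FᵀP + 2δP + (4α₁/(√N·π^{3/2}))·KᵀK and assume the (2N+3)×(2N+3) block matrix [[Φ, P𝓛, 0], [𝓛ᵀP, −2(λ_{N+1} − a − δ), 1], [0, 1, −α₁·λ_{N+1}^{−3/4}]] is negative definite, and additionally λ_{N+1}^{1/4} ≥ 3/(8α₁). Then for every X ∈ ℝ^{2N+1}, every ζ ∈ ℝ, and every real sequence (w_n)_{n>N} with ∑_{n=N+1}^∞ λ_n²·w_n² < ∞ and ζ² ≤ ∑_{n=N+1}^∞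 λ_n·w_n², it holds that Xᵀ(PF + FᵀP + 2δP)X + 2·XᵀP𝓛·ζ + 2·∑_{n=N+1}^∞ (−λ_n² + (a+δ)λ_n)·w_n² − 2·∑_{n=N+1}^∞ λ_n·b_n·w_n·(KX) ≤ 0. -/
/-!
Each tail term is estimated by Young's inequality with weight `2α₁ λₙ^{-3/4}`. The `wₙ`-part is
absorbed into the dissipation thanks to the monotonicity of `λ ↦ λ - λ^{3/4}/(2α₁)` on
`[λ_{N+1}, ∞)`, leaving `-2G ∑ λₙ wₙ²` with `G = λ_{N+1} - a - δ - λ_{N+1}^{3/4}/(2α₁)`; the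
`KX`-part sums to at most `4α₁/(√N π^{3/2}) (KX)²` because `∑_{n>N} n^{-3/2} ≤ 2/√N` by
telescoping. Eliminating the last coordinate of the LMI through its Schur complement, i.e.
evaluating it at `(X, ζ, λ_{N+1}^{3/4} ζ / α₁)`, gives `XᵀΦX + 2XᵀP𝓛ζ - 2Gζ² ≤ 0`, and the
same LMI at `(0, 1, λ_{N+1}^{3/4} / α₁)` gives `G > 0`, so `ζ² ≤ ∑ λₙ wₙ²` closes the estimate.
-/

open Real Matrix

theorem rpow_neg_three_halves_le {r : ℝ} (hr : 1 < r) :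
    r ^ (-(3 / 2 : ℝ)) ≤ 2 * ((√(r - 1))⁻¹ - (√r)⁻¹) := by
  have hp : 0 < √(r - 1) := sqrt_pos.2 (by linarith)
  have hq : 0 < √r := sqrt_pos.2 (by linarith)
  have hpq : √(r - 1) ≤ √r := sqrt_le_sqrt (by linarith)
  have hdiff : (√r - √(r - 1)) * (√r + √(r - 1)) = 1 := by
    nlinarith [sq_sqrt (by linarith : (0 : ℝ) ≤ r), sq_sqrt (by linarith : (0 : ℝ) ≤ r - 1)]
  have hlhs : r ^ (-(3 / 2 : ℝ)) = 1 / √r ^ 3 := by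
    rw [rpow_neg (by linarith), sqrt_eq_rpow, ← rpow_natCast, ← rpow_mul (by linarith)]
    norm_num
  have hrhs : 2 * ((√(r - 1))⁻¹ - (√r)⁻¹) = 2 / (√(r - 1) * √r * (√r + √(r - 1))) := by
    field_simp
    linear_combination hdiff
  rw [hlhs, hrhs, div_le_div_iff₀ (by positivity) (by positivity)]
  nlinarith [mul_le_mul_of_nonneg_left hpq (mul_pos hq hq).le,
    mul_le_mul_of_nonneg_left hpq (mul_pos hp hq).le]

theorem sum_range_rpow_neg_three_halves_le {x : ℝ} (hx : 0 < x) (n : ℕ) :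
    ∑ k ∈ Finset.range n, ((k : ℝ) + x + 1) ^ (-(3 / 2 : ℝ)) ≤ 2 / √x := by
  set f : ℕ → ℝ := fun k => (√((k : ℝ) + x))⁻¹
  calc ∑ k ∈ Finset.range n, ((k : ℝ) + x + 1) ^ (-(3 / 2 : ℝ))
      ≤ ∑ k ∈ Finset.range n, 2 * (f k - f (k + 1)) := by
        refine Finset.sum_le_sum fun k _ => ?_
        have := rpow_neg_three_halves_le (r := (k : ℝ) + x + 1)
          (by linarith [k.cast_nonneg (α := ℝ)])
        simpa [f, add_right_comm _ (1 : ℝ)] using this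
    _ = 2 * (f 0 - f n) := by rw [← Finset.mul_sum, Finset.sum_range_sub']
    _ ≤ 2 / √x := by
        have : 0 ≤ f n := by positivity
        simp only [f, Nat.cast_zero, zero_add] at this ⊢
        rw [div_eq_mul_inv]; linarith

theorem summable_rpow_neg_three_halves {x : ℝ} (hx : 0 < x) :
    Summable fun k : ℕ => ((k : ℝ) + x + 1) ^ (-(3 / 2 : ℝ)) :=
  summable_of_sum_range_le (fun _ => by positivity) (sum_range_rpow_neg_three_halves_le hx)

theorem tsum_rpow_neg_three_halves_le {x : ℝ} (hx : 0 < x) :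
    ∑' k : ℕ, ((k : ℝ) + x + 1) ^ (-(3 / 2 : ℝ)) ≤ 2 / √x :=
  tsum_le_of_sum_range_le (fun _ => by positivity) (sum_range_rpow_neg_three_halves_le hx)

/-- The derivative `x²(4x - 3/(2α))` is nonnegative for `x ≥ 3/(8α)`. -/
theorem pow_four_sub_pow_three_div_le {α A B : ℝ} (hα : 0 < α) (hBA : B ≤ A)
    (hB : 3 / (8 * α) ≤ B) : B ^ 4 - B ^ 3 / (2 * α) ≤ A ^ 4 - A ^ 3 / (2 * α) := by
  have h3 : 3 ≤ 8 * α * B := by rwa [div_le_iff₀' (by positivity)] at hB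
  have hfactor : 2 * α * ((A ^ 4 - A ^ 3 / (2 * α)) - (B ^ 4 - B ^ 3 / (2 * α)))
      = (A - B) * (2 * α * (A + B) * (A ^ 2 + B ^ 2) - (A ^ 2 + A * B + B ^ 2)) := by
    field_simp; ring
  have hsecond : 0 ≤ 2 * α * (A + B) * (A ^ 2 + B ^ 2) - (A ^ 2 + A * B + B ^ 2) := by
    have hαAB : α * B ≤ α * A := mul_le_mul_of_nonneg_left hBA hα.le
    nlinarith [sq_nonneg (A - B), mul_nonneg (by linarith : 0 ≤ 2 * α * (A + B) - 3 / 2)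
      (add_nonneg (sq_nonneg A) (sq_nonneg B))]
  have := mul_nonneg (sub_nonneg.2 hBA) hsecond
  nlinarith

theorem rpow_quarter_pow {x : ℝ} (hx : 0 ≤ x) (n : ℕ) :
    (x ^ (1 / 4 : ℝ)) ^ n = x ^ (n / 4 : ℝ) := by
  rw [← rpow_natCast, ← rpow_mul hx]; ring_nf

theorem sub_rpow_three_quarters_div_le {α s l : ℝ} (hα : 0 < α) (hs : 0 ≤ s) (hsl : s ≤ l)
    (hmono : 3 / (8 * α) ≤ s ^ (1 / 4 : ℝ)) :
    s - s ^ (3 / 4 : ℝ) / (2 * α) ≤ l - l ^ (3 / 4 : ℝ) / (2 * α) := by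
  have hl : 0 ≤ l := hs.trans hsl
  have key := pow_four_sub_pow_three_div_le hα (rpow_le_rpow hs hsl (by norm_num)) hmono
  rw [rpow_quarter_pow hs, rpow_quarter_pow hs, rpow_quarter_pow hl, rpow_quarter_pow hl] at key
  norm_num at key
  linarith

theorem two_mul_le_sq_div_add_mul_sq {t : ℝ} (ht : 0 < t) (p q : ℝ) :
    2 * (p * q) ≤ p ^ 2 / t + t * q ^ 2 := by
  rw [div_add' _ _ _ ht.ne', le_div_iff₀ ht]
  nlinarith [sq_nonneg (p - t * q)]

/-- Young's inequality with weight `2α/λ^{3/4}` absorbs the input term into the dissipation. -/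
theorem tail_term_le {α c s l b W κ : ℝ} (hα : 0 < α) (hs : 0 < s) (hsl : s ≤ l)
    (hmono : 3 / (8 * α) ≤ s ^ (1 / 4 : ℝ)) (hb : l * b ^ 2 = 2) :
    2 * ((-l ^ 2 + c * l) * W ^ 2) - 2 * (l * b * W * κ)
      ≤ -2 * (s - c - s ^ (3 / 4 : ℝ) / (2 * α)) * (l * W ^ 2)
        + 2 * α * κ ^ 2 * (l ^ (3 / 4 : ℝ))⁻¹ := by
  have hl : 0 < l := hs.trans_le hsl
  have hyoung := two_mul_le_sq_div_add_mul_sq (t := 2 * α / l ^ (3 / 4 : ℝ)) (by positivity)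
    (-(l * b * W)) κ
  have hsq : (-(l * b * W)) ^ 2 / (2 * α / l ^ (3 / 4 : ℝ))
      = l ^ (3 / 4 : ℝ) / (2 * α) * (2 * (l * W ^ 2)) := by
    rw [show (-(l * b * W)) ^ 2 = 2 * (l * W ^ 2) by linear_combination (l * W ^ 2) * hb]
    field_simp
  have hmono' := mul_le_mul_of_nonneg_left (sub_rpow_three_quarters_div_le hα hs.le hsl hmono)
    (by positivity : 0 ≤ 2 * (l * W ^ 2))
  rw [hsq] at hyoung
  linear_combination hyoung + hmono'

section Tail

variable {lam b w : ℕ → ℝ} {s : ℝ}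

theorem summable_mul_sq_of_summable_sq_mul_sq (hl : ∀ k, 1 ≤ lam k)
    (hw : Summable fun k => lam k ^ 2 * w k ^ 2) :
    Summable fun k => lam k * w k ^ 2 :=
  hw.of_nonneg_of_le (fun k => mul_nonneg (by linarith [hl k]) (sq_nonneg _)) fun k =>
    mul_le_mul_of_nonneg_right (le_self_pow₀ (hl k) two_ne_zero) (sq_nonneg _)

theorem summable_mul_mul_of_summable_sq_mul_sq (hl : ∀ k, 1 ≤ lam k)
    (hb : ∀ k, lam k * b k ^ 2 = 2)
    (hw : Summable fun k => lam k ^ 2 * w k ^ 2)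
    (hu : Summable fun k => (lam k ^ (3 / 4 : ℝ))⁻¹) :
    Summable fun k => lam k * b k * w k := by
  refine Summable.of_norm_bounded (g := fun k => lam k ^ 2 * w k ^ 2 + 2 * (lam k ^ (3 / 4 : ℝ))⁻¹)
    (hw.add (hu.mul_left 2)) fun k => ?_
  have hlk : 0 < lam k := by linarith [hl k]
  have hb2 : b k ^ 2 ≤ 2 * (lam k ^ (3 / 4 : ℝ))⁻¹ := by
    have hle : lam k ^ (3 / 4 : ℝ) ≤ lam k := by
      simpa using rpow_le_rpow_of_exponent_le (hl k) (by norm_num : (3 / 4 : ℝ) ≤ 1)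
    have hb' : b k ^ 2 = 2 * (lam k)⁻¹ := by
      field_simp; linear_combination hb k
    rw [hb']
    gcongr
  have := two_mul_le_add_sq |lam k * w k| |b k|
  rw [Real.norm_eq_abs, show lam k * b k * w k = (lam k * w k) * b k by ring, abs_mul]
  nlinarith [sq_abs (lam k * w k), sq_abs (b k), abs_nonneg (lam k * w k), abs_nonneg (b k)]

theorem tail_tsum_le {α c κ : ℝ} (hα : 0 < α) (hs : 1 ≤ s) (hsl : ∀ k, s ≤ lam k)
    (hmono : 3 / (8 * α) ≤ s ^ (1 / 4 : ℝ)) (hb : ∀ k, lam k * b k ^ 2 = 2)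
    (hw : Summable fun k => lam k ^ 2 * w k ^ 2)
    (hu : Summable fun k => (lam k ^ (3 / 4 : ℝ))⁻¹) :
    2 * ∑' k, (-lam k ^ 2 + c * lam k) * w k ^ 2 - 2 * ∑' k, lam k * b k * w k * κ
      ≤ -2 * (s - c - s ^ (3 / 4 : ℝ) / (2 * α)) * ∑' k, lam k * w k ^ 2
        + 2 * α * κ ^ 2 * ∑' k, (lam k ^ (3 / 4 : ℝ))⁻¹ := by
  have hl k : 1 ≤ lam k := hs.trans (hsl k)
  have hlw := summable_mul_sq_of_summable_sq_mul_sq hl hw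
  have hquad : Summable fun k => (-lam k ^ 2 + c * lam k) * w k ^ 2 :=
    (hw.neg.add (hlw.mul_left c)).congr fun k => by ring
  have hcross := (summable_mul_mul_of_summable_sq_mul_sq hl hb hw hu).mul_right κ
  calc 2 * ∑' k, (-lam k ^ 2 + c * lam k) * w k ^ 2 - 2 * ∑' k, lam k * b k * w k * κ
      = ∑' k, (2 * ((-lam k ^ 2 + c * lam k) * w k ^ 2) - 2 * (lam k * b k * w k * κ)) := by
        rw [(hquad.mul_left 2).tsum_sub (hcross.mul_left 2), tsum_mul_left, tsum_mul_left]
    _ ≤ ∑' k, (-2 * (s - c - s ^ (3 / 4 : ℝ) / (2 * α)) * (lam k * w k ^ 2)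
          + 2 * α * κ ^ 2 * (lam k ^ (3 / 4 : ℝ))⁻¹) :=
        ((hquad.mul_left 2).sub (hcross.mul_left 2)).tsum_le_tsum
          (fun k => tail_term_le hα (by linarith) (hsl k) hmono (hb k))
          ((hlw.mul_left _).add (hu.mul_left _))
    _ = _ := by rw [(hlw.mul_left _).tsum_add (hu.mul_left _), tsum_mul_left, tsum_mul_left]

end Tail

/-- `[[Φ, v, 0], [vᵀ, p, q], [0, q, r]]`, the shape of the LMI matrix. -/
def borderedMatrix {n : Type*} (Φ : Matrix n n ℝ) (v : n → ℝ) (p q r : ℝ) :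
    Matrix (n ⊕ Fin 2) (n ⊕ Fin 2) ℝ :=
  fromBlocks Φ (of fun i (j : Fin 2) => if j = 0 then v i else 0)
    (of fun (i : Fin 2) j => if i = 0 then v j else 0) !![p, q; q, r]

theorem quadForm_sumElim_borderedMatrix {n : Type*} [Fintype n] (Φ : Matrix n n ℝ) (v Y : n → ℝ)
    (p q r y z : ℝ) :
    Sum.elim Y ![y, z] ⬝ᵥ borderedMatrix Φ v p q r *ᵥ Sum.elim Y ![y, z]
      = Y ⬝ᵥ Φ *ᵥ Y + 2 * (Y ⬝ᵥ v) * y + (p * y ^ 2 + 2 * q * y * z + r * z ^ 2) := by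
  have h1 : (of fun i (j : Fin 2) => if j = 0 then v i else 0) *ᵥ ![y, z] = y • v := by
    ext i; simp [mulVec, dotProduct, mul_comm]
  have h2 : (of fun (i : Fin 2) j => if i = 0 then v j else 0) *ᵥ Y = ![v ⬝ᵥ Y, 0] := by
    ext i; fin_cases i <;> simp [mulVec]
  rw [borderedMatrix, fromBlocks_mulVec, Sum.elim_comp_inl, Sum.elim_comp_inr,
    sumElim_dotProduct_sumElim, h1, h2]
  simp only [dotProduct_add, dotProduct_smul, smul_eq_mul, dotProduct_comm v Y]
  simp [dotProduct, Fin.sum_univ_two, mulVec]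
  ring

theorem quadForm_sumElim_borderedMatrix_schur {n : Type*} [Fintype n] (Φ : Matrix n n ℝ)
    (v Y : n → ℝ) {p q r : ℝ} (hr : r ≠ 0) (y : ℝ) :
    Sum.elim Y ![y, -(q * y / r)] ⬝ᵥ borderedMatrix Φ v p q r *ᵥ Sum.elim Y ![y, -(q * y / r)]
      = Y ⬝ᵥ Φ *ᵥ Y + 2 * (Y ⬝ᵥ v) * y + (p - q ^ 2 / r) * y ^ 2 := by
  rw [quadForm_sumElim_borderedMatrix]
  field_simp
  ring

theorem schur_quadForm_nonpos {n : Type*} [Fintype n] {Φ : Matrix n n ℝ} {v : n → ℝ}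
    {p q r : ℝ} (hr : r ≠ 0)
    (hneg : (-borderedMatrix Φ v p q r).PosDef)
    (Y : n → ℝ) (y : ℝ) :
    Y ⬝ᵥ Φ *ᵥ Y + 2 * (Y ⬝ᵥ v) * y + (p - q ^ 2 / r) * y ^ 2 ≤ 0 := by
  have := hneg.posSemidef.dotProduct_mulVec_nonneg (Sum.elim Y ![y, -(q * y / r)])
  rw [star_trivial, neg_mulVec, dotProduct_neg,
    quadForm_sumElim_borderedMatrix_schur Φ v Y hr] at this
  linarith

theorem schurComplement_neg {n : Type*} [Fintype n] {Φ : Matrix n n ℝ} {v : n → ℝ}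
    {p q r : ℝ} (hr : r ≠ 0)
    (hneg : (-borderedMatrix Φ v p q r).PosDef) :
    p - q ^ 2 / r < 0 := by
  have hne : Sum.elim (0 : n → ℝ) ![1, -(q * 1 / r)] ≠ 0 := fun h => by
    simpa using congrFun h (Sum.inr 0)
  have := hneg.dotProduct_mulVec_pos hne
  rw [star_trivial, neg_mulVec, dotProduct_neg,
    quadForm_sumElim_borderedMatrix_schur Φ v 0 hr] at this
  simpa using this

theorem dotProduct_vecMulVec_mulVec_self {n : Type*} [Fintype n] (K X : n → ℝ) :
    X ⬝ᵥ vecMulVec K K *ᵥ X = (K ⬝ᵥ X) ^ 2 := by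
  rw [vecMulVec_mulVec, op_smul_eq_smul, dotProduct_smul, smul_eq_mul, dotProduct_comm X K, sq]

theorem inv_sq_mul_pi_sq_rpow {y : ℝ} (hy : 0 ≤ y) :
    ((y ^ 2 * π ^ 2) ^ (3 / 4 : ℝ))⁻¹ = (π ^ (3 / 2 : ℝ))⁻¹ * y ^ (-(3 / 2 : ℝ)) := by
  rw [← mul_pow, ← rpow_natCast, ← rpow_mul (by positivity), mul_rpow hy pi_pos.le,
    rpow_neg hy, mul_inv]
  norm_num
  ring

theorem summable_inv_eigenvalue_rpow {x : ℝ} (hx : 0 < x) :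
    Summable fun k : ℕ => ((((k : ℝ) + x + 1) ^ 2 * π ^ 2) ^ (3 / 4 : ℝ))⁻¹ :=
  ((summable_rpow_neg_three_halves hx).mul_left _).congr fun k =>
    (inv_sq_mul_pi_sq_rpow (by positivity)).symm

theorem tsum_inv_eigenvalue_rpow_le {x : ℝ} (hx : 0 < x) :
    ∑' k : ℕ, ((((k : ℝ) + x + 1) ^ 2 * π ^ 2) ^ (3 / 4 : ℝ))⁻¹ ≤ 2 / (√x * π ^ (3 / 2 : ℝ)) := by
  rw [tsum_congr fun k => inv_sq_mul_pi_sq_rpow (by positivity), tsum_mul_left,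
    ← div_div, div_eq_inv_mul (2 / √x)]
  gcongr
  exact tsum_rpow_neg_three_halves_le hx

theorem lmi_schurComplement_eq {s c α : ℝ} (hs : 0 < s) (hα : 0 < α) :
    -2 * (s - c) - 1 ^ 2 / (-α * s ^ (-(3 / 4 : ℝ)))
      = -2 * (s - c - s ^ (3 / 4 : ℝ) / (2 * α)) := by
  rw [rpow_neg hs.le]
  field_simp
  ring

theorem sq_mul_pi_sq_mul_sqrt_two_div_sq {y : ℝ} (hy : 0 < y) :
    y ^ 2 * π ^ 2 * (√2 / (y * π)) ^ 2 = 2 := by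
  rw [div_pow, sq_sqrt zero_le_two]
  field_simp

theorem stmt_12_general (N : ℕ) (hN : 0 < N) (a δ α₁ : ℝ) (hα₁ : 0 < α₁)
    (P F : Matrix (Fin (2 * N + 1)) (Fin (2 * N + 1)) ℝ)
    (L K : Fin (2 * N + 1) → ℝ)
    (Φ : Matrix (Fin (2 * N + 1)) (Fin (2 * N + 1)) ℝ)
    (hΦ : Φ = P * F + Fᵀ * P + (2 * δ) • P
      + (4 * α₁ / (Real.sqrt (N : ℝ) * π ^ ((3 : ℝ) / 2))) • Matrix.vecMulVec K K)
    (M : Matrix (Fin (2 * N + 1) ⊕ Fin 2) (Fin (2 * N + 1) ⊕ Fin 2) ℝ)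
    (hM : M = Matrix.fromBlocks Φ
      (Matrix.of fun i (j : Fin 2) => if j = 0 then P.mulVec L i else 0)
      (Matrix.of fun (i : Fin 2) j => if i = 0 then P.mulVec L j else 0)
      !![-2 * (((N : ℝ) + 1) ^ 2 * π ^ 2 - a - δ), 1;
         1, -α₁ * ((((N : ℝ) + 1) ^ 2 * π ^ 2) ^ (-(3 / 4 : ℝ)))])
    (hLMI : (-M).PosDef)
    (hmono : ((((N : ℝ) + 1) ^ 2 * π ^ 2) ^ ((1 : ℝ) / 4)) ≥ 3 / (8 * α₁)) :
    ∀ (X : Fin (2 * N + 1) → ℝ) (ζ : ℝ) (w : ℕ → ℝ),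
      Summable (fun k : ℕ => ((((k : ℝ) + (N : ℝ) + 1) ^ 2 * π ^ 2) ^ 2) * (w k) ^ 2) →
      ζ ^ 2 ≤ ∑' k : ℕ, (((k : ℝ) + (N : ℝ) + 1) ^ 2 * π ^ 2) * (w k) ^ 2 →
      X ⬝ᵥ (P * F + Fᵀ * P + (2 * δ) • P).mulVec X
        + 2 * (X ⬝ᵥ P.mulVec L) * ζ
        + 2 * (∑' k : ℕ, (-((((k : ℝ) + (N : ℝ) + 1) ^ 2 * π ^ 2) ^ 2)
            + (a + δ) * (((k : ℝ) + (N : ℝ) + 1) ^ 2 * π ^ 2)) * (w k) ^ 2)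
        - 2 * (∑' k : ℕ, (((k : ℝ) + (N : ℝ) + 1) ^ 2 * π ^ 2) *
            (Real.sqrt 2 / (((k : ℝ) + (N : ℝ) + 1) * π)) * w k * (K ⬝ᵥ X))
      ≤ 0 := by
  intro X ζ w hw hζ
  set s : ℝ := ((N : ℝ) + 1) ^ 2 * π ^ 2
  set G : ℝ := s - (a + δ) - s ^ (3 / 4 : ℝ) / (2 * α₁)
  have hNpos : (0 : ℝ) < N := Nat.cast_pos.2 hN
  have hs : 1 ≤ s :=
    one_le_mul_of_one_le_of_one_le (one_le_pow₀ (by linarith))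
      (one_le_pow₀ (by linarith [pi_gt_three]))
  have hsl (k : ℕ) : s ≤ ((k : ℝ) + N + 1) ^ 2 * π ^ 2 := by
    simp only [s]
    gcongr
    linarith [k.cast_nonneg (α := ℝ)]
  have hr : -α₁ * s ^ (-(3 / 4 : ℝ)) ≠ 0 :=
    mul_ne_zero (neg_ne_zero.2 hα₁.ne') (rpow_pos_of_pos (by linarith) _).ne'
  rw [show s - a - δ = s - (a + δ) by ring] at hM
  subst hM
  have hG : 0 < G := by
    have := schurComplement_neg hr hLMI
    rw [lmi_schurComplement_eq (by linarith) hα₁] at this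
    linarith
  have hLMIX := schur_quadForm_nonpos hr hLMI X ζ
  rw [lmi_schurComplement_eq (by linarith) hα₁, hΦ, add_mulVec, dotProduct_add, smul_mulVec,
    dotProduct_smul, dotProduct_vecMulVec_mulVec_self, smul_eq_mul] at hLMIX
  have htail := tail_tsum_le (κ := K ⬝ᵥ X) (c := a + δ) hα₁ hs hsl hmono
    (fun k => sq_mul_pi_sq_mul_sqrt_two_div_sq (by positivity)) hw
    (summable_inv_eigenvalue_rpow hNpos)
  have hdiss := mul_le_mul_of_nonneg_left hζ (by positivity : 0 ≤ 2 * G)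
  have hinput := mul_le_mul_of_nonneg_left (tsum_inv_eigenvalue_rpow_le hNpos)
    (by positivity : 0 ≤ 2 * α₁ * (K ⬝ᵥ X) ^ 2)
  have hconst : 2 * α₁ * (K ⬝ᵥ X) ^ 2 * (2 / (√N * π ^ (3 / 2 : ℝ)))
      = 4 * α₁ / (√N * π ^ ((3 : ℝ) / 2)) * (K ⬝ᵥ X) ^ 2 := by
    ring
  linarith

/-- The LMI (23): with `λ_n = n²π²`, `b_n = √2/(nπ)` (here index `k` stands for
`n = N+1+k`), `Φ = PF + FᵀP + 2δP + (4α₁/(√N π^{3/2}))KᵀK`, if the block matrix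
`[[Φ, P𝓛, 0], [𝓛ᵀP, −2(λ_{N+1}−a−δ), 1], [0, 1, −α₁λ_{N+1}^{−3/4}]]` is negative
definite and `λ_{N+1}^{1/4} ≥ 3/(8α₁)`, then for every `X`, `ζ` and tail sequence
`(w_n)_{n>N}` with `∑ λ_n² w_n² < ∞` and `ζ² ≤ ∑ λ_n w_n²`,
`Xᵀ(PF+FᵀP+2δP)X + 2XᵀP𝓛ζ + 2∑(−λ_n²+(a+δ)λ_n)w_n² − 2∑ λ_n b_n w_n (KX) ≤ 0`. -/
theorem stmt_12 (N : ℕ) (hN : 0 < N) (a δ α₁ : ℝ) (hδ : 0 < δ) (hα₁ : 0 < α₁)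
    (P F : Matrix (Fin (2 * N + 1)) (Fin (2 * N + 1)) ℝ) (hP : P.PosDef)
    (L K : Fin (2 * N + 1) → ℝ)
    (Φ : Matrix (Fin (2 * N + 1)) (Fin (2 * N + 1)) ℝ)
    (hΦ : Φ = P * F + Fᵀ * P + (2 * δ) • P
      + (4 * α₁ / (Real.sqrt (N : ℝ) * π ^ ((3 : ℝ) / 2))) • Matrix.vecMulVec K K)
    (M : Matrix (Fin (2 * N + 1) ⊕ Fin 2) (Fin (2 * N + 1) ⊕ Fin 2) ℝ)
    (hM : M = Matrix.fromBlocks Φ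
      (Matrix.of fun i (j : Fin 2) => if j = 0 then P.mulVec L i else 0)
      (Matrix.of fun (i : Fin 2) j => if i = 0 then P.mulVec L j else 0)
      !![-2 * (((N : ℝ) + 1) ^ 2 * π ^ 2 - a - δ), 1;
         1, -α₁ * ((((N : ℝ) + 1) ^ 2 * π ^ 2) ^ (-(3 / 4 : ℝ)))])
    (hLMI : (-M).PosDef)
    (hmono : ((((N : ℝ) + 1) ^ 2 * π ^ 2) ^ ((1 : ℝ) / 4)) ≥ 3 / (8 * α₁)) :
    ∀ (X : Fin (2 * N + 1) → ℝ) (ζ : ℝ) (w : ℕ → ℝ),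
      Summable (fun k : ℕ => ((((k : ℝ) + (N : ℝ) + 1) ^ 2 * π ^ 2) ^ 2) * (w k) ^ 2) →
      ζ ^ 2 ≤ ∑' k : ℕ, (((k : ℝ) + (N : ℝ) + 1) ^ 2 * π ^ 2) * (w k) ^ 2 →
      X ⬝ᵥ (P * F + Fᵀ * P + (2 * δ) • P).mulVec X
        + 2 * (X ⬝ᵥ P.mulVec L) * ζ
        + 2 * (∑' k : ℕ, (-((((k : ℝ) + (N : ℝ) + 1) ^ 2 * π ^ 2) ^ 2)
            + (a + δ) * (((k : ℝ) + (N : ℝ) + 1) ^ 2 * π ^ 2)) * (w k) ^ 2)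
        - 2 * (∑' k : ℕ, (((k : ℝ) + (N : ℝ) + 1) ^ 2 * π ^ 2) *
            (Real.sqrt 2 / (((k : ℝ) + (N : ℝ) + 1) * π)) * w k * (K ⬝ᵥ X))
      ≤ 0 :=
  stmt_12_general N hN a δ α₁ hα₁ P F L K Φ hΦ M hM hLMI hmono
end
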